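/- Let (E, L, E) be a labeled space, where E denotes the smallest non-degenerate accommodating set. Then (E, L, E) is strongly cofinal if and only if for all nonempty A ∈ E, all B ∈ E, and every x in the closure of L(E^∞) (i.e., every infinite word x all of whose finite prefixes are labeled paths), there exists N ≥ 1 such that r(B, x_{[1,N]}) ∈ H(A), where H(A) is the smallest hereditary subset of E containing A. -/

import Mathlib

universe u v

variable {V : Type u} {Λ : Type v}

/-- The relative range `r(S, α)` of a set of vertices along a labeled path. -/
def relRange (Edge : V → Λ → V → Prop) : Set V → List Λ → Set V
  | S, [] => S
  | S, a :: α => relRange Edge {w | ∃ u ∈ S, Edge u a w} α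

/-- The range `r(α)` of a labeled path. -/
def lrange (Edge : V → Λ → V → Prop) (α : List Λ) : Set V :=
  relRange Edge Set.univ α

/-- `α` is a (nonempty) labeled path of the labeled graph. -/
def IsLP (Edge : V → Λ → V → Prop) (α : List Λ) : Prop :=
  α ≠ [] ∧ (lrange Edge α).Nonempty

/-- `L(SE¹)`: labels of edges emitted from `S`. -/
def edgeLabels (Edge : V → Λ → V → Prop) (S : Set V) : Set Λ :=
  {a | ∃ u ∈ S, ∃ w, Edge u a w}

/-- `S` is regular: every nonempty `B ∈ ℬ` with `B ⊆ S` emits a finite nonzero set of labels. -/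
def RegularSet (Edge : V → Λ → V → Prop) (ℬ : Set (Set V)) (S : Set V) : Prop :=
  ∀ B ∈ ℬ, B ⊆ S → B.Nonempty →
    (edgeLabels Edge B).Finite ∧ (edgeLabels Edge B).Nonempty

/-- `H ⊆ ℬ` is hereditary. -/
def Hered (Edge : V → Λ → V → Prop) (ℬ H : Set (Set V)) : Prop :=
  H ⊆ ℬ ∧ (∀ A ∈ H, ∀ α : List Λ, IsLP Edge α → relRange Edge A α ∈ H) ∧
    (∀ A ∈ H, ∀ B ∈ H, A ∪ B ∈ H) ∧ (∀ A ∈ H, ∀ B ∈ ℬ, B ⊆ A → B ∈ H)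

/-- `H` is saturated. -/
def Satur (Edge : V → Λ → V → Prop) (ℬ H : Set (Set V)) : Prop :=
  ∀ A ∈ ℬ, RegularSet Edge ℬ A →
    (∀ α : List Λ, IsLP Edge α → relRange Edge A α ∈ H) → A ∈ H

/-- `H(A)`: sets covered by finitely many relative ranges `r(A, αᵢ)`, `αᵢ ∈ L^#(E)`. -/
def HSet (Edge : V → Λ → V → Prop) (ℬ : Set (Set V)) (A : Set V) : Set (Set V) :=
  {B ∈ ℬ | ∃ l : List (List Λ), (∀ α ∈ l, α = [] ∨ IsLP Edge α) ∧
    B ⊆ ⋃ α ∈ l, relRange Edge A α}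

/-- `S(H(A))`: the saturation of `H(A)`. -/
def SHSet (Edge : V → Λ → V → Prop) (ℬ : Set (Set V)) (A : Set V) : Set (Set V) :=
  {B ∈ ℬ | ∃ n : ℕ,
    (∀ β : List Λ, (β = [] ∨ IsLP Edge β) → β.length = n →
      relRange Edge B β ∈ HSet Edge ℬ A) ∧
    (∀ γ : List Λ, (γ = [] ∨ IsLP Edge γ) → γ.length < n →
      ∃ C ∈ HSet Edge ℬ A, ∃ D ∈ ℬ, RegularSet Edge ℬ D ∧ relRange Edge B γ = C ∪ D)}

/-- `ℬ` is an accommodating set for the labeled graph. -/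
def Accommodating (Edge : V → Λ → V → Prop) (ℬ : Set (Set V)) : Prop :=
  (∀ α : List Λ, IsLP Edge α → lrange Edge α ∈ ℬ) ∧
    (∀ A ∈ ℬ, ∀ α : List Λ, IsLP Edge α → relRange Edge A α ∈ ℬ) ∧
    (∀ A ∈ ℬ, ∀ B ∈ ℬ, A ∪ B ∈ ℬ) ∧ (∀ A ∈ ℬ, ∀ B ∈ ℬ, A ∩ B ∈ ℬ)

/-- `ℬ` is non-degenerate: closed under relative complements (and contains `∅`). -/
def NonDegenerate (ℬ : Set (Set V)) : Prop :=
  (∅ : Set V) ∈ ℬ ∧ ∀ A ∈ ℬ, ∀ B ∈ ℬ, A \ B ∈ ℬ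

/-- The labeled space is weakly left-resolving. -/
def WLR (Edge : V → Λ → V → Prop) (ℬ : Set (Set V)) : Prop :=
  ∀ A ∈ ℬ, ∀ B ∈ ℬ, ∀ α : List Λ, IsLP Edge α →
    relRange Edge (A ∩ B) α = relRange Edge A α ∩ relRange Edge B α

/-- `ℬ` is the smallest non-degenerate accommodating set. -/
def SmallestAccom (Edge : V → Λ → V → Prop) (ℬ : Set (Set V)) : Prop :=
  Accommodating Edge ℬ ∧ NonDegenerate ℬ ∧
    ∀ ℬ' : Set (Set V), Accommodating Edge ℬ' → NonDegenerate ℬ' → ℬ ⊆ ℬ'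

/-- `x_{[1,n]}`: the length-`n` prefix of an infinite word. -/
def wordPrefix (x : ℕ → Λ) (n : ℕ) : List Λ := List.ofFn fun i : Fin n => x i.val

/-- `x` lies in the closure of `L(E^∞)`: all finite prefixes are labeled paths. -/
def InfWord (Edge : V → Λ → V → Prop) (x : ℕ → Λ) : Prop :=
  ∀ n : ℕ, 1 ≤ n → IsLP Edge (wordPrefix x n)

/-- Strong cofinality of a labeled space. -/
def StrCofinal (Edge : V → Λ → V → Prop) (ℬ : Set (Set V)) : Prop :=
  ∀ A ∈ ℬ, A.Nonempty → ∀ x : ℕ → Λ, InfWord Edge x →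
    ∃ N : ℕ, 1 ≤ N ∧ ∃ l : List (List Λ), (∀ α ∈ l, IsLP Edge α) ∧
      lrange Edge (wordPrefix x N) ⊆ ⋃ α ∈ l, relRange Edge A α

/-- Minimality: the only hereditary saturated subsets of `ℬ` are `{∅}` and `ℬ`. -/
def MinimalLS (Edge : V → Λ → V → Prop) (ℬ : Set (Set V)) : Prop :=
  ∀ H : Set (Set V), Hered Edge ℬ H → Satur Edge ℬ H → H ⊆ {∅} ∨ H = ℬ

/-- `L(SEⁿ)`: labels of paths of length `n` with source in `S`. -/
def labelsOfLen (Edge : V → Λ → V → Prop) (S : Set V) (n : ℕ) : Set (List Λ) :=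
  {β | β.length = n ∧ (relRange Edge S β).Nonempty}

/-- The labeled space is disagreeable. -/
def Disagreeable (Edge : V → Λ → V → Prop) (ℬ : Set (Set V)) : Prop :=
  ∀ A ∈ ℬ, A.Nonempty → ∀ β : List Λ, IsLP Edge β →
    ∃ n : ℕ, 1 ≤ n ∧ labelsOfLen Edge A (β.length * n) ≠ {(List.replicate n β).flatten}

/-- `(α, A)` is a cycle. -/
def IsCycle (Edge : V → Λ → V → Prop) (ℬ : Set (Set V)) (α : List Λ) (A : Set V) : Prop :=
  IsLP Edge α ∧ A ∈ ℬ ∧ A.Nonempty ∧ ∀ B ∈ ℬ, B ⊆ A → relRange Edge B α = B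

/-- The cycle `(α, A)` has an exit. -/
def CycleHasExit (Edge : V → Λ → V → Prop) (ℬ : Set (Set V)) (α : List Λ) (A : Set V) : Prop :=
  ∃ t : ℕ, 1 ≤ t ∧ t ≤ α.length ∧ ∃ B ∈ ℬ, B.Nonempty ∧
    B ⊆ relRange Edge A (α.take t) ∧
    edgeLabels Edge B ≠ {a : Λ | α[t % α.length]? = some a}

/-- The cycle `(α, A)` has no exits. -/
def CycleNoExit (Edge : V → Λ → V → Prop) (ℬ : Set (Set V)) (α : List Λ) (A : Set V) : Prop :=
  ∀ t : ℕ, 1 ≤ t → t ≤ α.length → ∀ B ∈ ℬ, B.Nonempty →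
    B ⊆ relRange Edge A (α.take t) →
    RegularSet Edge ℬ B ∧ edgeLabels Edge B = {a : Λ | α[t % α.length]? = some a}

/-- Condition (L): every cycle has an exit. -/
def CondL (Edge : V → Λ → V → Prop) (ℬ : Set (Set V)) : Prop :=
  ∀ (α : List Λ) (A : Set V), IsCycle Edge ℬ α A → CycleHasExit Edge ℬ α A

/-- `α` is a loop at `A`. -/
def IsLoop (Edge : V → Λ → V → Prop) (α : List Λ) (A : Set V) : Prop :=
  IsLP Edge α ∧ A ⊆ relRange Edge A α

/-- The loop `(α, A)` has an exit. -/
def LoopHasExit (Edge : V → Λ → V → Prop) (α : List Λ) (A : Set V) : Prop :=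
  {β : List Λ | ∃ k : ℕ, 1 ≤ k ∧ k ≤ α.length ∧ β = α.take k} ⊂
      {β : List Λ | 1 ≤ β.length ∧ β.length ≤ α.length ∧ (relRange Edge A β).Nonempty} ∨
    A ⊂ relRange Edge A α

/-- `β` is an irreducible path: not a repetition of a proper initial path. -/
def IrreduciblePath (β : List Λ) : Prop :=
  ∀ k : ℕ, 1 ≤ k → k < β.length → ∀ m : ℕ, β ≠ (List.replicate m (β.take k)).flatten

/-- The generalized vertex `[v]_l`. -/
def gvClass (Edge : V → Λ → V → Prop) (l : ℕ) (v : V) : Set V :=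
  {w | ∀ β : List Λ, 1 ≤ β.length → β.length ≤ l → (v ∈ lrange Edge β ↔ w ∈ lrange Edge β)}

/-- `s(x)`: sources of infinite paths labeled by `x`. -/
def srcInf (Edge : V → Λ → V → Prop) (x : ℕ → Λ) : Set V :=
  {w | ∃ p : ℕ → V, p 0 = w ∧ ∀ n : ℕ, Edge (p n) (x n) (p (n + 1))}

/-!
Strong cofinality gives a cover of `r(x_{[1,N]})`, which contains `r(B, x_{[1,N]})` for every `B`.
Conversely, apply the condition to `B = r(x₁)` and the shifted word `x₂x₃…`: this covers
`r(x_{[1,N+1]})` by relative ranges `r(A, αᵢ)`, where some `αᵢ` may be empty. Reading one more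
letter turns every `αᵢ` into a nonempty word, and words with empty range can be dropped from the
cover, leaving only labeled paths.
-/

section RelRange

variable (Edge : V → Λ → V → Prop)

lemma relRange_mono {S T : Set V} (h : S ⊆ T) (α : List Λ) :
    relRange Edge S α ⊆ relRange Edge T α := by
  induction α generalizing S T with
  | nil => exact h
  | cons a α ih => exact ih fun w ⟨u, hu, he⟩ => ⟨u, h hu, he⟩

lemma relRange_subset_lrange (S : Set V) (α : List Λ) :
    relRange Edge S α ⊆ lrange Edge α :=
  relRange_mono Edge (Set.subset_univ S) α

lemma relRange_append (S : Set V) (α β : List Λ) :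
    relRange Edge S (α ++ β) = relRange Edge (relRange Edge S α) β := by
  induction α generalizing S with
  | nil => rfl
  | cons a α ih => exact ih _

lemma relRange_iUnion {ι : Sort*} (S : ι → Set V) (α : List Λ) :
    relRange Edge (⋃ i, S i) α = ⋃ i, relRange Edge (S i) α := by
  induction α generalizing S with
  | nil => rfl
  | cons a α ih =>
    have hstep : {w | ∃ u ∈ ⋃ i, S i, Edge u a w} = ⋃ i, {w | ∃ u ∈ S i, Edge u a w} := by
      ext w
      simp only [Set.mem_iUnion]
      constructor
      · rintro ⟨u, ⟨i, hu⟩, he⟩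
        exact ⟨i, u, hu, he⟩
      · rintro ⟨i, u, hu, he⟩
        exact ⟨u, ⟨i, hu⟩, he⟩
    simp only [relRange, hstep, ih]

lemma lrange_cons (a : Λ) (α : List Λ) :
    lrange Edge (a :: α) = relRange Edge (lrange Edge [a]) α :=
  relRange_append Edge Set.univ [a] α

lemma IsLP.of_cons {a : Λ} {α : List Λ} (h : IsLP Edge (a :: α)) (hα : α ≠ []) :
    IsLP Edge α := by
  obtain ⟨w, hw⟩ := h.2
  rw [lrange_cons] at hw
  exact ⟨hα, w, relRange_subset_lrange Edge _ α hw⟩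

lemma exists_isLP_cover_relRange {A S : Set V} {l : List (List Λ)}
    (hS : S ⊆ ⋃ α ∈ l, relRange Edge A α) {β : List Λ} (hβ : β ≠ []) :
    ∃ l' : List (List Λ), (∀ α ∈ l', IsLP Edge α) ∧
      relRange Edge S β ⊆ ⋃ α ∈ l', relRange Edge A α := by
  classical
  refine ⟨(l.map (· ++ β)).filter fun α => (lrange Edge α).Nonempty, ?_, ?_⟩
  · intro α hα
    obtain ⟨hmap, hne⟩ := List.mem_filter.mp hα
    obtain ⟨γ, -, rfl⟩ := List.mem_map.mp hmap
    exact ⟨List.append_ne_nil_of_right_ne_nil γ hβ, of_decide_eq_true hne⟩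
  · intro w hw
    have hw' := relRange_mono Edge hS β hw
    simp only [relRange_iUnion, Set.mem_iUnion] at hw'
    obtain ⟨γ, hγ, hwγ⟩ := hw'
    rw [← relRange_append] at hwγ
    refine Set.mem_biUnion (List.mem_filter.mpr ⟨List.mem_map_of_mem hγ, ?_⟩) hwγ
    exact decide_eq_true ⟨w, relRange_subset_lrange Edge A _ hwγ⟩

end RelRange

lemma wordPrefix_succ (x : ℕ → Λ) (n : ℕ) :
    wordPrefix x (n + 1) = x 0 :: wordPrefix (fun k => x (k + 1)) n :=
  List.ofFn_succ

lemma wordPrefix_succ' (x : ℕ → Λ) (n : ℕ) :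
    wordPrefix x (n + 1) = wordPrefix x n ++ [x n] := by
  rw [wordPrefix, List.ofFn_succ', List.concat_eq_append]
  rfl

lemma InfWord.tail {Edge : V → Λ → V → Prop} {x : ℕ → Λ} (hx : InfWord Edge x) :
    InfWord Edge fun k => x (k + 1) := by
  intro n hn
  have hpath := hx (n + 1) (by omega)
  rw [wordPrefix_succ] at hpath
  have hlen : 0 < (wordPrefix (fun k => x (k + 1)) n).length := by
    rw [wordPrefix, List.length_ofFn]
    omega
  exact hpath.of_cons Edge (List.ne_nil_of_length_pos hlen)

theorem strongly_cofinal_iff_general (Edge : V → Λ → V → Prop) (ℰ : Set (Set V))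
    (hsm : SmallestAccom Edge ℰ) :
    StrCofinal Edge ℰ ↔
      ∀ A ∈ ℰ, A.Nonempty → ∀ B ∈ ℰ, ∀ x : ℕ → Λ, InfWord Edge x →
        ∃ N : ℕ, 1 ≤ N ∧ relRange Edge B (wordPrefix x N) ∈ HSet Edge ℰ A := by
  obtain ⟨⟨hrange, hrelRange, -⟩, -⟩ := hsm
  constructor
  · intro hsc A hA hAne B hB x hx
    obtain ⟨N, hN, l, hl, hcover⟩ := hsc A hA hAne x hx
    exact ⟨N, hN, hrelRange B hB _ (hx N hN), l, fun α hα => Or.inr (hl α hα),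
      (relRange_subset_lrange Edge B _).trans hcover⟩
  · intro h A hA hAne x hx
    obtain ⟨N, -, -, l, -, hcover⟩ :=
      h A hA hAne _ (hrange _ (hx 1 le_rfl)) _ hx.tail
    have hprefix : lrange Edge (wordPrefix x (N + 1)) ⊆ ⋃ α ∈ l, relRange Edge A α := by
      rwa [wordPrefix_succ, lrange_cons]
    obtain ⟨l', hl', hcover'⟩ :=
      exists_isLP_cover_relRange Edge hprefix (List.cons_ne_nil (x (N + 1)) [])
    refine ⟨N + 2, by omega, l', hl', ?_⟩
    rwa [wordPrefix_succ' x (N + 1), lrange, relRange_append]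

/-- strong cofinality is equivalent to: for all nonempty `A ∈ ℰ`, `B ∈ ℰ`
and `x` in the closure of `L(E^∞)`, some `r(B, x_{[1,N]})` lies in `H(A)`. -/
theorem strongly_cofinal_iff (Edge : V → Λ → V → Prop) (ℰ : Set (Set V))
    (hsm : SmallestAccom Edge ℰ) (hwlr : WLR Edge ℰ) :
    StrCofinal Edge ℰ ↔
      ∀ A ∈ ℰ, A.Nonempty → ∀ B ∈ ℰ, ∀ x : ℕ → Λ, InfWord Edge x →
        ∃ N : ℕ, 1 ≤ N ∧ relRange Edge B (wordPrefix x N) ∈ HSet Edge ℰ A :=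
  strongly_cofinal_iff_general Edge ℰ hsm
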